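/- arXiv:1503.06429 — 4 statements merged into one kernel-verified Lean document; each statement's English description precedes it below -/
import Mathlib

section
/- For p ∈ (0,1), λ > 0, μ ∈ ℝ, with α = √(p/(1−p)) and β = λα/(α²+1), the integral of the asymmetric Laplace pdf ψ over (−∞, μ) equals p. -/
/-! On `(-∞, μ)` the density is `β·exp(c(x-μ))` with `c = λ/α`, whose integral is `β/c = α²/(α²+1)`;
since `α² = p/(1-p)` is the odds of `p`, this is `p`. -/

open MeasureTheory Real

theorem integral_Iio_exp_mul_sub {a : ℝ} (ha : 0 < a) (μ : ℝ) :
    ∫ x in Set.Iio μ, exp (a * (x - μ)) = 1 / a := by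
  have hsplit : ∀ x, exp (a * (x - μ)) = exp (a * x) / exp (a * μ) := fun x => by
    rw [mul_sub, exp_sub]
  simp_rw [hsplit, ← integral_Iic_eq_integral_Iio, integral_div, integral_exp_mul_Iic ha]
  field_simp

theorem sq_sqrt_odds_div_add_one {p : ℝ} (hp : 0 ≤ p) (hp1 : p < 1) :
    √(p / (1 - p)) ^ 2 / (√(p / (1 - p)) ^ 2 + 1) = p := by
  have h1p : 0 < 1 - p := by linarith
  rw [sq_sqrt (div_nonneg hp h1p.le)]
  field_simp
  ring

theorem asymmetric_laplace_left_mass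
    (p l μ : ℝ) (hp : 0 < p) (hp1 : p < 1) (hl : 0 < l)
    (α β : ℝ) (hα : α = Real.sqrt (p / (1 - p))) (hβ : β = l * α / (α ^ 2 + 1)) :
    ∫ x in Set.Iio μ,
      (if μ ≤ x then β * Real.exp (-(l * α * (x - μ)))
       else β * Real.exp (l * α⁻¹ * (x - μ))) = p := by
  have hαpos : 0 < α := hα ▸ sqrt_pos.2 (div_pos hp (by linarith))
  have hleft : ∫ x in Set.Iio μ,
      (if μ ≤ x then β * exp (-(l * α * (x - μ))) else β * exp (l * α⁻¹ * (x - μ)))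
      = ∫ x in Set.Iio μ, β * exp (l * α⁻¹ * (x - μ)) :=
    setIntegral_congr_fun measurableSet_Iio fun x hx => if_neg (not_le.2 hx)
  rw [hleft, integral_const_mul, integral_Iio_exp_mul_sub (by positivity),
    ← sq_sqrt_odds_div_add_one hp.le hp1, ← hα, hβ]
  field_simp
end

section
/- For the function γ(μ) = α·Σ_{sᵢ ≥ μ}(sᵢ−μ) − α⁻¹·Σ_{sᵢ < μ}(sᵢ−μ): if μ < μ′ and some sample sᵢ satisfies μ < sᵢ < μ′, then γ(tμ + (1−t)μ′) < t·γ(μ) + (1−t)·γ(μ′) for all t ∈ (0,1). -/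
open Real

lemma gamma_as_sum (α : ℝ) (S : Multiset ℝ) (ν : ℝ) :
    α * ((S.filter fun s => ν ≤ s).map fun s => s - ν).sum
      - α⁻¹ * ((S.filter fun s => s < ν).map fun s => s - ν).sum
    = (S.map fun s => if ν ≤ s then α * (s - ν) else -α⁻¹ * (s - ν)).sum := by
  induction S using Multiset.induction with
  | empty => simp
  | cons a s ih =>
    by_cases h : ν ≤ a
    · simp only [Multiset.filter_cons, if_pos h, if_neg (not_lt.2 h), Multiset.map_cons,
        Multiset.sum_cons, Multiset.map_add, Multiset.sum_add, Multiset.map_singleton,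
        Multiset.sum_singleton, Multiset.map_zero, Multiset.sum_zero, zero_add]
      linarith [ih]
    · simp only [Multiset.filter_cons, if_neg h, if_pos (not_le.mp h), Multiset.map_cons,
        Multiset.sum_cons, Multiset.map_add, Multiset.sum_add, Multiset.map_singleton,
        Multiset.sum_singleton, Multiset.map_zero, Multiset.sum_zero, zero_add]
      linarith [ih]

lemma sum_map_comb (S : Multiset ℝ) (t u : ℝ) (f g : ℝ → ℝ) :
    (S.map fun s => t * f s + u * g s).sum = t * (S.map f).sum + u * (S.map g).sum := by
  induction S using Multiset.induction with
  | empty => simp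
  | cons a s ih =>
    simp only [Multiset.map_cons, Multiset.sum_cons, ih]
    ring

theorem asymmetric_laplace_gamma_strict_between_samples
    (p : ℝ) (hp : 0 < p) (hp1 : p < 1)
    (S : Multiset ℝ)
    (α : ℝ) (hα : α = Real.sqrt (p / (1 - p)))
    (γ : ℝ → ℝ)
    (hγ : ∀ μ : ℝ, γ μ =
      α * ((S.filter fun s => μ ≤ s).map fun s => s - μ).sum
        - α⁻¹ * ((S.filter fun s => s < μ).map fun s => s - μ).sum)
    (μ μ' : ℝ) (hμμ' : μ < μ')
    (hsample : ∃ s ∈ S, μ < s ∧ s < μ') :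
    ∀ t : ℝ, 0 < t → t < 1 →
      γ (t * μ + (1 - t) * μ') < t * γ μ + (1 - t) * γ μ' := by
  intro t ht ht1
  have ht1' : (0:ℝ) < 1 - t := by linarith
  have hαpos : 0 < α := by
    rw [hα]
    exact Real.sqrt_pos.mpr (div_pos hp (by linarith))
  have hαinv : 0 < α⁻¹ := inv_pos.mpr hαpos
  set h : ℝ → ℝ → ℝ := fun ν s => if ν ≤ s then α * (s - ν) else -α⁻¹ * (s - ν) with hh
  have hγsum : ∀ ν, γ ν = (S.map (h ν)).sum := fun ν => by
    rw [hγ ν, gamma_as_sum]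
  set ν := t * μ + (1 - t) * μ' with hν
  -- h ρ s is ≥ both linear pieces
  have hge1 : ∀ ρ s : ℝ, α * (s - ρ) ≤ h ρ s := by
    intro ρ s
    simp only [hh]
    split_ifs with hc
    · exact le_refl _
    · nlinarith [not_le.mp hc]
  have hge2 : ∀ ρ s : ℝ, -α⁻¹ * (s - ρ) ≤ h ρ s := by
    intro ρ s
    simp only [hh]
    split_ifs with hc
    · nlinarith
    · exact le_refl _
  have c1 : ∀ s, t * (α * (s - μ)) ≤ t * h μ s :=
    fun s => mul_le_mul_of_nonneg_left (hge1 μ s) ht.le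
  have c2 : ∀ s, (1 - t) * (α * (s - μ')) ≤ (1 - t) * h μ' s :=
    fun s => mul_le_mul_of_nonneg_left (hge1 μ' s) ht1'.le
  have c3 : ∀ s, t * (-α⁻¹ * (s - μ)) ≤ t * h μ s :=
    fun s => mul_le_mul_of_nonneg_left (hge2 μ s) ht.le
  have c4 : ∀ s, (1 - t) * (-α⁻¹ * (s - μ')) ≤ (1 - t) * h μ' s :=
    fun s => mul_le_mul_of_nonneg_left (hge2 μ' s) ht1'.le
  have e1 : ∀ s : ℝ, α * (s - ν) = t * (α * (s - μ)) + (1 - t) * (α * (s - μ')) := by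
    intro s; rw [hν]; ring
  have e2 : ∀ s : ℝ, -α⁻¹ * (s - ν) = t * (-α⁻¹ * (s - μ)) + (1 - t) * (-α⁻¹ * (s - μ')) := by
    intro s; rw [hν]; ring
  -- pointwise convexity
  have hpt : ∀ s : ℝ, h ν s ≤ t * h μ s + (1 - t) * h μ' s := by
    intro s
    have hcase : h ν s = α * (s - ν) ∨ h ν s = -α⁻¹ * (s - ν) := by
      simp only [hh]; split_ifs <;> [exact Or.inl rfl; exact Or.inr rfl]
    rcases hcase with hc | hc <;> rw [hc]
    · rw [e1 s]; exact add_le_add (c1 s) (c2 s)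
    · rw [e2 s]; exact add_le_add (c3 s) (c4 s)
  -- strict at the witness
  obtain ⟨w, hwS, hw1, hw2⟩ := hsample
  have hstrict : h ν w < t * h μ w + (1 - t) * h μ' w := by
    have hm : h μ w = α * (w - μ) := by simp only [hh]; rw [if_pos (le_of_lt hw1)]
    have hm' : h μ' w = -α⁻¹ * (w - μ') := by simp only [hh]; rw [if_neg (not_le.mpr hw2)]
    have key1 : α * (w - μ') < -α⁻¹ * (w - μ') := by nlinarith
    have key2 : -α⁻¹ * (w - μ) < α * (w - μ) := by nlinarith
    have hcase : h ν w = α * (w - ν) ∨ h ν w = -α⁻¹ * (w - ν) := by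
      simp only [hh]; split_ifs <;> [exact Or.inl rfl; exact Or.inr rfl]
    rw [hm, hm']
    rcases hcase with hc | hc <;> rw [hc]
    · rw [e1 w]
      have := mul_lt_mul_of_pos_left key1 ht1'
      linarith
    · rw [e2 w]
      have := mul_lt_mul_of_pos_left key2 ht
      linarith
  have hsum : (S.map (h ν)).sum < (S.map fun s => t * h μ s + (1 - t) * h μ' s).sum :=
    Multiset.sum_lt_sum (fun s _ => hpt s) ⟨w, hwS, hstrict⟩
  rw [hγsum, hγsum, hγsum]
  calc (S.map (h ν)).sum < _ := hsum
    _ = _ := sum_map_comb S t (1 - t) (h μ) (h μ')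
end

section
/- If μ₁* and μ₂* with μ₁* < μ₂* are both minimizers of γ(μ) = α·Σ_{sᵢ ≥ μ}(sᵢ−μ) − α⁻¹·Σ_{sᵢ < μ}(sᵢ−μ), then no sample sᵢ satisfies μ₁* < sᵢ < μ₂*; hence all minimizers induce the same partition of S into S₋ and S₊. -/
open Real

theorem asymmetric_laplace_minimizers_same_partition
    (p : ℝ) (hp : 0 < p) (hp1 : p < 1)
    (S : Multiset ℝ)
    (α : ℝ) (hα : α = Real.sqrt (p / (1 - p)))
    (γ : ℝ → ℝ)
    (hγ : ∀ μ : ℝ, γ μ =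
      α * ((S.filter fun s => μ ≤ s).map fun s => s - μ).sum
        - α⁻¹ * ((S.filter fun s => s < μ).map fun s => s - μ).sum)
    (μ₁ μ₂ : ℝ) (h12 : μ₁ < μ₂)
    (hmin₁ : ∀ μ : ℝ, γ μ₁ ≤ γ μ)
    (hmin₂ : ∀ μ : ℝ, γ μ₂ ≤ γ μ) :
    ¬ ∃ s ∈ S, μ₁ < s ∧ s < μ₂ := by
  have hα0 : 0 < α := by
    rw [hα]
    exact Real.sqrt_pos.2 (div_pos hp (by linarith))
  have hαi : 0 < α⁻¹ := inv_pos.2 hα0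
  set c : ℝ → ℝ → ℝ := fun μ s => if μ ≤ s then α * (s - μ) else α⁻¹ * (μ - s) with hc
  have hγ' : ∀ μ : ℝ, γ μ = (S.map (c μ)).sum := by
    intro μ
    rw [hγ μ]
    have hsplit := Multiset.filter_add_not (fun s => μ ≤ s) S
    conv_rhs => rw [← hsplit]
    rw [Multiset.map_add, Multiset.sum_add]
    have h1 : ((S.filter fun s => μ ≤ s).map (c μ)).sum
        = α * ((S.filter fun s => μ ≤ s).map fun s => s - μ).sum := by
      rw [← Multiset.sum_map_mul_left]
      apply congrArg
      apply Multiset.map_congr rfl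
      intro x hx
      have : μ ≤ x := (Multiset.mem_filter.1 hx).2
      simp [hc, this]
    have h2 : ((S.filter fun s => ¬ μ ≤ s).map (c μ)).sum
        = - α⁻¹ * ((S.filter fun s => s < μ).map fun s => s - μ).sum := by
      have hfe : (S.filter fun s => ¬ μ ≤ s) = S.filter fun s => s < μ := by
        apply Multiset.filter_congr
        intro x _
        simp [not_le]
      rw [hfe]
      rw [show (-α⁻¹ : ℝ) * ((S.filter fun s => s < μ).map fun s => s - μ).sum
          = ((S.filter fun s => s < μ).map fun s => -α⁻¹ * (s - μ)).sum by
        rw [Multiset.sum_map_mul_left]]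
      apply congrArg
      apply Multiset.map_congr rfl
      intro x hx
      have hxlt : x < μ := by
        have := (Multiset.mem_filter.1 hx).2
        simpa using this
      have : ¬ μ ≤ x := not_le.2 hxlt
      simp [hc, this]
      ring
    rw [h1, h2]
    ring
  rintro ⟨s₀, hs₀S, hs₀1, hs₀2⟩
  set m : ℝ := (μ₁ + μ₂) / 2 with hm
  have hkey : ((S.map fun s => 2 * c m s)).sum < ((S.map fun s => c μ₁ s + c μ₂ s)).sum := by
    apply Multiset.sum_lt_sum
    · intro s hs
      simp only [hc]
      split_ifs <;> nlinarith [mul_pos hα0 hαi]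
    · refine ⟨s₀, hs₀S, ?_⟩
      simp only [hc]
      have h1 : μ₁ ≤ s₀ := hs₀1.le
      have h2 : ¬ μ₂ ≤ s₀ := not_le.2 hs₀2
      split_ifs <;> nlinarith [mul_pos hα0 hαi]
  have hsum1 : ((S.map fun s => 2 * c m s)).sum = 2 * γ m := by
    rw [hγ' m, Multiset.sum_map_mul_left]
  have hsum2 : ((S.map fun s => c μ₁ s + c μ₂ s)).sum = γ μ₁ + γ μ₂ := by
    rw [hγ' μ₁, hγ' μ₂, ← Multiset.sum_map_add]
  have heq : γ μ₁ = γ μ₂ := le_antisymm (hmin₁ μ₂) (hmin₂ μ₁)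
  have := hmin₁ m
  rw [hsum1, hsum2] at hkey
  linarith
end

section
/- For fixed p ∈ (0,1) with α = √(p/(1−p)) and finite multiset S, the function γ(μ) = α⁻²·Σ_{sᵢ < μ}(sᵢ−μ)² + α²·Σ_{sᵢ ≥ μ}(sᵢ−μ)² is continuously differentiable with derivative γ′(μ) = −2α²·Σ_{sᵢ ≥ μ}(sᵢ−μ) − 2α⁻²·Σ_{sᵢ < μ}(sᵢ−μ), and is strictly convex on ℝ. -/
/-!
Writing `x₋ = min x 0` and `x₊ = max x 0`, the function is `γ μ = ∑ s ∈ S, ρ (s - μ)` for the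
asymmetric square `ρ x = α⁻² x₋² + α² x₊²`. Away from `0`, `ρ` is a quadratic, and its candidate
derivative `ρ' x = 2 (α⁻² x₋ + α² x₊)` is continuous, so `ρ` is `C¹`. Since `ρ'` is strictly
increasing, so is `γ' μ = -∑ ρ' (s - μ)` as soon as `S` is nonempty, and `γ` is strictly convex.
-/

open Filter Topology

theorem HasDerivAt.multiset_sum {ι 𝕜 F : Type*} [NontriviallyNormedField 𝕜] [NormedAddCommGroup F]
    [NormedSpace 𝕜 F] {f : ι → 𝕜 → F} {f' : ι → F} {x : 𝕜} (S : Multiset ι)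
    (h : ∀ i ∈ S, HasDerivAt (f i) (f' i) x) :
    HasDerivAt (fun y => (S.map fun i => f i y).sum) (S.map f').sum x := by
  induction S using Multiset.induction_on with
  | empty => simpa using hasDerivAt_const x (0 : F)
  | cons i S ih =>
    simp only [Multiset.map_cons, Multiset.sum_cons, Multiset.forall_mem_cons] at h ⊢
    exact h.1.add (ih h.2)

theorem Multiset.sum_map_filter_eq_sum_map {ι M : Type*} [AddCommMonoid M] {p : ι → Prop}
    [DecidablePred p] (S : Multiset ι) {f g : ι → M} (hfg : ∀ i, p i → f i = g i)
    (hg : ∀ i, ¬ p i → g i = 0) : ((S.filter p).map f).sum = (S.map g).sum := by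
  conv_rhs => rw [← Multiset.filter_add_not p S]
  rw [Multiset.map_add, Multiset.sum_add,
    Multiset.map_congr rfl fun i hi => hfg i (Multiset.mem_filter.1 hi).2,
    Multiset.map_congr rfl fun i hi => hg i (Multiset.mem_filter.1 hi).2]
  simp

def asymSq (a b x : ℝ) : ℝ := a * min x 0 ^ 2 + b * max x 0 ^ 2

def asymSqDeriv (a b x : ℝ) : ℝ := 2 * (a * min x 0 + b * max x 0)

theorem hasDerivAt_asymSq (a b x : ℝ) : HasDerivAt (asymSq a b) (asymSqDeriv a b x) x := by
  refine hasDerivAt_of_hasDerivAt_of_ne' (x := 0) (fun y hy => ?_)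
    (by unfold asymSq; fun_prop) (by unfold asymSqDeriv; fun_prop) x
  rcases hy.lt_or_gt with hy | hy
  · have h : asymSq a b =ᶠ[𝓝 y] fun z => a * z ^ 2 := by
      filter_upwards [eventually_lt_nhds hy] with z hz
      simp [asymSq, min_eq_left hz.le, max_eq_right hz.le]
    refine (((hasDerivAt_pow 2 y).const_mul a).congr_of_eventuallyEq h).congr_deriv ?_
    simp [asymSqDeriv, min_eq_left hy.le, max_eq_right hy.le]
    ring
  · have h : asymSq a b =ᶠ[𝓝 y] fun z => b * z ^ 2 := by
      filter_upwards [eventually_gt_nhds hy] with z hz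
      simp [asymSq, min_eq_right hz.le, max_eq_left hz.le]
    refine (((hasDerivAt_pow 2 y).const_mul b).congr_of_eventuallyEq h).congr_deriv ?_
    simp [asymSqDeriv, min_eq_right hy.le, max_eq_left hy.le]
    ring

@[fun_prop]
theorem continuous_asymSqDeriv (a b : ℝ) : Continuous (asymSqDeriv a b) := by
  unfold asymSqDeriv; fun_prop

theorem strictMono_asymSqDeriv {a b : ℝ} (ha : 0 < a) (hb : 0 < b) :
    StrictMono (asymSqDeriv a b) := by
  intro x y hxy
  have hmin : min x 0 ≤ min y 0 := min_le_min_right 0 hxy.le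
  have hmax : max x 0 ≤ max y 0 := max_le_max_right 0 hxy.le
  have hsplit : ∀ z : ℝ, min z 0 + max z 0 = z := fun z => by rw [min_add_max, add_zero]
  have hstrict : min x 0 < min y 0 ∨ max x 0 < max y 0 := by
    by_contra! h
    linarith [hsplit x, hsplit y]
  unfold asymSqDeriv
  rcases hstrict with h | h <;> nlinarith

theorem sum_map_asymSq_sub (a b μ : ℝ) (S : Multiset ℝ) :
    (S.map fun s => asymSq a b (s - μ)).sum =
      a * ((S.filter fun s => s < μ).map fun s => (s - μ) ^ 2).sum
        + b * ((S.filter fun s => μ ≤ s).map fun s => (s - μ) ^ 2).sum := by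
  rw [S.sum_map_filter_eq_sum_map (p := fun s => s < μ) (g := fun s => min (s - μ) 0 ^ 2)
      (fun s hs => by rw [min_eq_left (by linarith)]) (fun s hs => by simp [not_lt.1 hs]),
    S.sum_map_filter_eq_sum_map (p := fun s => μ ≤ s) (g := fun s => max (s - μ) 0 ^ 2)
      (fun s hs => by rw [max_eq_left (by linarith)]) (fun s hs => by simp [(not_le.1 hs).le]),
    ← Multiset.sum_map_mul_left, ← Multiset.sum_map_mul_left, ← Multiset.sum_map_add]
  rfl

theorem neg_sum_map_asymSqDeriv_sub (a b μ : ℝ) (S : Multiset ℝ) :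
    -(S.map fun s => asymSqDeriv a b (s - μ)).sum =
      -2 * b * ((S.filter fun s => μ ≤ s).map fun s => s - μ).sum
        - 2 * a * ((S.filter fun s => s < μ).map fun s => s - μ).sum := by
  rw [S.sum_map_filter_eq_sum_map (p := fun s => s < μ) (g := fun s => min (s - μ) 0)
      (fun s hs => by rw [min_eq_left (by linarith)]) (fun s hs => by simp [not_lt.1 hs]),
    S.sum_map_filter_eq_sum_map (p := fun s => μ ≤ s) (g := fun s => max (s - μ) 0)
      (fun s hs => by rw [max_eq_left (by linarith)]) (fun s hs => by simp [(not_le.1 hs).le]),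
    ← Multiset.sum_map_mul_left, ← Multiset.sum_map_mul_left, ← Multiset.sum_map_sub,
    ← Multiset.sum_map_neg]
  refine congrArg Multiset.sum (Multiset.map_congr rfl fun s _ => ?_)
  simp only [asymSqDeriv]
  ring

theorem hasDerivAt_sum_map_asymSq_sub (a b : ℝ) (S : Multiset ℝ) (μ : ℝ) :
    HasDerivAt (fun μ => (S.map fun s => asymSq a b (s - μ)).sum)
      (-(S.map fun s => asymSqDeriv a b (s - μ)).sum) μ := by
  have h := HasDerivAt.multiset_sum S fun s _ =>
    (hasDerivAt_asymSq a b (s - μ)).comp μ ((hasDerivAt_id μ).const_sub s)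
  simpa [Multiset.sum_map_neg] using h

theorem strictMono_neg_sum_map_asymSqDeriv_sub {a b : ℝ} (ha : 0 < a) (hb : 0 < b)
    {S : Multiset ℝ} (hS : S ≠ 0) :
    StrictMono fun μ => -(S.map fun s => asymSqDeriv a b (s - μ)).sum := fun _ _ hμ =>
  neg_lt_neg <| Multiset.sum_lt_sum_of_nonempty hS fun _ _ =>
    strictMono_asymSqDeriv ha hb (sub_lt_sub_left hμ _)

theorem asymmetric_normal_gamma_smooth_strictly_convex
    (p : ℝ) (hp : 0 < p) (hp1 : p < 1)
    (S : Multiset ℝ) (hS : S ≠ 0)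
    (α : ℝ) (hα : α = Real.sqrt (p / (1 - p)))
    (γ γ' : ℝ → ℝ)
    (hγ : ∀ μ : ℝ, γ μ =
      α⁻¹ ^ 2 * ((S.filter fun s => s < μ).map fun s => (s - μ) ^ 2).sum
        + α ^ 2 * ((S.filter fun s => μ ≤ s).map fun s => (s - μ) ^ 2).sum)
    (hγ' : ∀ μ : ℝ, γ' μ =
      -2 * α ^ 2 * ((S.filter fun s => μ ≤ s).map fun s => s - μ).sum
        - 2 * α⁻¹ ^ 2 * ((S.filter fun s => s < μ).map fun s => s - μ).sum) :
    (∀ μ : ℝ, HasDerivAt γ (γ' μ) μ) ∧ Continuous γ'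
      ∧ StrictConvexOn ℝ Set.univ γ := by
  have hα_pos : 0 < α := hα ▸ Real.sqrt_pos.2 (div_pos hp (sub_pos.2 hp1))
  have hγ_eq : γ = fun μ => (S.map fun s => asymSq (α⁻¹ ^ 2) (α ^ 2) (s - μ)).sum :=
    funext fun μ => by rw [hγ, sum_map_asymSq_sub]
  have hγ'_eq : γ' = fun μ => -(S.map fun s => asymSqDeriv (α⁻¹ ^ 2) (α ^ 2) (s - μ)).sum :=
    funext fun μ => by rw [hγ', neg_sum_map_asymSqDeriv_sub]
  have hderiv : ∀ μ, HasDerivAt γ (γ' μ) μ := by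
    rw [hγ_eq, hγ'_eq]
    exact hasDerivAt_sum_map_asymSq_sub _ _ S
  have hmono : StrictMono γ' :=
    hγ'_eq ▸ strictMono_neg_sum_map_asymSqDeriv_sub (by positivity) (by positivity) hS
  refine ⟨hderiv, hγ'_eq ▸ by fun_prop, ?_⟩
  have hγ_cont : Continuous γ := continuous_iff_continuousAt.2 fun μ => (hderiv μ).continuousAt
  have hγ_deriv : deriv γ = γ' := funext fun μ => (hderiv μ).deriv
  exact StrictMono.strictConvexOn_univ_of_deriv hγ_cont (hγ_deriv ▸ hmono)
end
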